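/- Let H be the graph H_t (t ≥ 3) consisting of a cycle on vertices 0, 1, ..., 2t−1 together with extra vertices a, a', b, b' and edges (t+1)a, tb, ab, aa', bb'. Then every walk in H_t from a vertex in {0, 1} to a vertex in {t, t+1, a, b, a', b'} has at least t vertices. -/

import Mathlib

/-
The quantity `baseDist` below is the distance from `{0, 1}` in `H_t`: along the cycle a vertex
`i` is `i - 1` steps above `1` and `2t - i` steps below `0 = 2t`, the vertices `a, b` hang off
`t + 1, t` (both at distance `t - 1`), and `a', b'` one step further out. It changes by at most one
along each edge, so a walk ending in `{t, t+1, a, b, a', b'}` needs at least `t - 1` edges.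
-/

open SimpleGraph

/-- The graph `H_t`: a cycle on `ZMod (2t)` (vertices `0,…,2t−1`) together with
extra vertices `a = inr 0`, `a' = inr 1`, `b = inr 2`, `b' = inr 3` and edges
`(t+1)a`, `tb`, `ab`, `aa'`, `bb'`. -/
def Ht (t : ℕ) : SimpleGraph (ZMod (2 * t) ⊕ Fin 4) :=
  SimpleGraph.fromRel (fun x y =>
    match x, y with
    | Sum.inl i, Sum.inl j => j = i + 1
    | Sum.inl i, Sum.inr j =>
        (i = ((t : ℕ) + 1 : ℕ) ∧ (j : ℕ) = 0) ∨ (i = (t : ℕ) ∧ (j : ℕ) = 2)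
    | Sum.inr i, Sum.inr j =>
        ((i : ℕ) = 0 ∧ (j : ℕ) = 2) ∨ ((i : ℕ) = 0 ∧ (j : ℕ) = 1) ∨
          ((i : ℕ) = 2 ∧ (j : ℕ) = 3)
    | _, _ => False)

theorem SimpleGraph.Walk.apply_le_apply_add_length {V : Type*} {G : SimpleGraph V} (f : V → ℕ)
    (hf : ∀ ⦃x y⦄, G.Adj x y → f y ≤ f x + 1) {u v : V} (p : G.Walk u v) :
    f v ≤ f u + p.length := by
  induction p with
  | nil => simp
  | cons h _ ih =>
    rw [Walk.length_cons]
    have := hf h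
    omega

theorem ZMod.val_add_one_eq_or {n : ℕ} (hn : 1 < n) (i : ZMod n) :
    (i + 1).val = i.val + 1 ∨ (i.val + 1 = n ∧ (i + 1).val = 0) := by
  have : NeZero n := ⟨by omega⟩
  have hone : (1 : ZMod n).val = 1 := ZMod.val_one'' (by omega)
  have hi := ZMod.val_lt i
  rcases Nat.lt_or_ge (i.val + 1) n with h | h
  · left
    rw [ZMod.val_add_of_lt (by omega), hone]
  · right
    refine ⟨by omega, ?_⟩
    rw [ZMod.val_add_of_le (by omega), hone]
    omega

namespace Ht

/-- `i.val - 1` truncates to `0` at `i = 0`, as it should. -/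
def baseDist (t : ℕ) : ZMod (2 * t) ⊕ Fin 4 → ℕ
  | Sum.inl i => min (i.val - 1) (2 * t - i.val)
  | Sum.inr j => if j = 0 ∨ j = 2 then t else t + 1

variable {t : ℕ}

theorem baseDist_inl_zero : baseDist t (Sum.inl 0) = 0 := by
  simp [baseDist]

theorem baseDist_inl_one : baseDist t (Sum.inl 1) = 0 := by
  simp only [baseDist, ZMod.val_one'' (show 2 * t ≠ 1 by omega)]
  omega

theorem baseDist_inl_natCast {k : ℕ} (hk : k < 2 * t) :
    baseDist t (Sum.inl (k : ZMod (2 * t))) = min (k - 1) (2 * t - k) := by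
  simp only [baseDist, ZMod.val_natCast_of_lt hk]

theorem baseDist_inl_natCast_self (ht : 0 < t) :
    baseDist t (Sum.inl ((t : ℕ) : ZMod (2 * t))) = t - 1 := by
  rw [baseDist_inl_natCast (by omega)]
  omega

theorem baseDist_inl_natCast_succ (ht : 1 < t) :
    baseDist t (Sum.inl ((t + 1 : ℕ) : ZMod (2 * t))) = t - 1 := by
  rw [baseDist_inl_natCast (by omega)]
  omega

theorem baseDist_inr_zero : baseDist t (Sum.inr 0) = t := rfl

theorem baseDist_inr_two : baseDist t (Sum.inr 2) = t := rfl

theorem le_baseDist_inr (j : Fin 4) : t ≤ baseDist t (Sum.inr j) := by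
  simp only [baseDist]
  split_ifs <;> omega

theorem baseDist_inr_le (j : Fin 4) : baseDist t (Sum.inr j) ≤ t + 1 := by
  simp only [baseDist]
  split_ifs <;> omega

theorem baseDist_inl_add_one (ht : 0 < t) (i : ZMod (2 * t)) :
    baseDist t (Sum.inl (i + 1)) ≤ baseDist t (Sum.inl i) + 1 ∧
      baseDist t (Sum.inl i) ≤ baseDist t (Sum.inl (i + 1)) + 1 := by
  have : NeZero (2 * t) := ⟨by omega⟩
  have hi := ZMod.val_lt i
  simp only [baseDist]
  rcases ZMod.val_add_one_eq_or (show 1 < 2 * t by omega) i with h | ⟨hwrap, h⟩ <;>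
    rw [h] <;> omega

theorem baseDist_le_of_adj (ht : 1 < t) {x y : ZMod (2 * t) ⊕ Fin 4} (h : (Ht t).Adj x y) :
    baseDist t y ≤ baseDist t x + 1 := by
  have hcast_t := baseDist_inl_natCast_self (t := t) (by omega)
  have hcast_t1 := baseDist_inl_natCast_succ ht
  rw [Ht, fromRel_adj] at h
  obtain ⟨-, h⟩ := h
  rcases x with i | i <;> rcases y with j | j
  · rcases h with rfl | rfl
    · exact (baseDist_inl_add_one (by omega) i).1
    · exact (baseDist_inl_add_one (by omega) j).2
  · rcases h with (⟨rfl, hj⟩ | ⟨rfl, hj⟩) | h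
    · rw [Fin.ext (show (j : ℕ) = (0 : Fin 4) from hj), baseDist_inr_zero, hcast_t1]; omega
    · rw [Fin.ext (show (j : ℕ) = (2 : Fin 4) from hj), baseDist_inr_two, hcast_t]; omega
    · exact h.elim
  · rcases h with h | (⟨rfl, hi⟩ | ⟨rfl, hi⟩)
    · exact h.elim
    · rw [Fin.ext (show (i : ℕ) = (0 : Fin 4) from hi), baseDist_inr_zero, hcast_t1]; omega
    · rw [Fin.ext (show (i : ℕ) = (2 : Fin 4) from hi), baseDist_inr_two, hcast_t]; omega
  · exact (baseDist_inr_le j).trans (Nat.add_le_add_right (le_baseDist_inr i) 1)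

end Ht

/-- Every walk in `H_t` from a vertex in `{0,1}` to a vertex in
`{t, t+1, a, b, a', b'}` has at least `t` vertices. -/
theorem stmt15 (t : ℕ) (ht : 3 ≤ t) (u v : ZMod (2 * t) ⊕ Fin 4)
    (p : (Ht t).Walk u v)
    (hu : u ∈ ({Sum.inl 0, Sum.inl 1} : Set (ZMod (2 * t) ⊕ Fin 4)))
    (hv : v ∈ ({Sum.inl ((t : ℕ) : ZMod (2 * t)),
        Sum.inl (((t : ℕ) + 1 : ℕ) : ZMod (2 * t)),
        Sum.inr 0, Sum.inr 1, Sum.inr 2, Sum.inr 3} :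
        Set (ZMod (2 * t) ⊕ Fin 4))) :
    t ≤ p.length + 1 := by
  have hstart : Ht.baseDist t u = 0 := by
    rcases hu with rfl | rfl
    exacts [Ht.baseDist_inl_zero, Ht.baseDist_inl_one]
  have hend : t - 1 ≤ Ht.baseDist t v := by
    rcases hv with rfl | rfl | rfl | rfl | rfl | rfl
    · exact (Ht.baseDist_inl_natCast_self (by omega)).ge
    · exact (Ht.baseDist_inl_natCast_succ (by omega)).ge
    all_goals exact (Nat.sub_le t 1).trans (Ht.le_baseDist_inr _)
  have := p.apply_le_apply_add_length _ (fun _ _ => Ht.baseDist_le_of_adj (by omega))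
  omega
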